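/- For every positive integer n, ι(Q_{n+1}) = γ(Q_n), where Q_n denotes the n-dimensional hypercube graph. -/

import Mathlib

/-- The closed neighborhood `N[A]` of a set of vertices. -/
def closedNbhd {V : Type*} (G : SimpleGraph V) (A : Set V) : Set V :=
  {v | v ∈ A ∨ ∃ a ∈ A, G.Adj a v}

/-- A set of vertices is independent if it contains no edge. -/
def IndepSet {V : Type*} (G : SimpleGraph V) (S : Set V) : Prop :=
  ∀ u ∈ S, ∀ v ∈ S, ¬ G.Adj u v

/-- `A` is isolating if the vertices outside `N[A]` form an independent set. -/
def IsIsolating {V : Type*} (G : SimpleGraph V) (A : Set V) : Prop :=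
  IndepSet G (closedNbhd G A)ᶜ

/-- The isolation number `ι(G)`. -/
noncomputable def isolationNum {V : Type*} (G : SimpleGraph V) : ℕ :=
  sInf {n | ∃ A : Set V, IsIsolating G A ∧ A.ncard = n}

/-- `D` is a dominating set if `N[D] = V(G)`. -/
def IsDominating {V : Type*} (G : SimpleGraph V) (D : Set V) : Prop :=
  closedNbhd G D = Set.univ

/-- The domination number `γ(G)`. -/
noncomputable def dominationNum {V : Type*} (G : SimpleGraph V) : ℕ :=
  sInf {n | ∃ D : Set V, IsDominating G D ∧ D.ncard = n}
/-- The `n`-dimensional hypercube graph `Q_n`: vertices are `{0,1}^n`, two vertices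
being adjacent iff they differ in exactly one coordinate. -/
def hypercube (n : ℕ) : SimpleGraph (Fin n → Bool) where
  Adj u v := ∃ i, u i ≠ v i ∧ ∀ j, u j ≠ v j → j = i
  symm := by
    constructor
    rintro u v ⟨i, h1, h2⟩
    exact ⟨i, h1.symm, fun j hj => h2 j hj.symm⟩
  loopless := by
    constructor
    rintro u ⟨i, h1, -⟩
    exact h1 rfl

/-!
Splitting off the last coordinate gives `Q_{n+1} ≅ Q_n □ K₂`, so it suffices to show
`ι(G □ K₂) = γ(G)` for every finite bipartite graph `G`. The projection of an isolating set `A`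
of `G □ K₂` onto `G` dominates `G`: a vertex `v` missed by the projection would leave both
`(v, 0)` and `(v, 1)` outside `N[A]`, yet they are adjacent. Conversely, if `c` is a proper
2-colouring of `G` (for `Q_n`, the parity of the number of ones) and `D` dominates `G`, then
`{(d, c d) | d ∈ D}` isolates `G □ K₂`: the only vertices it misses are of the form `(v, c v)`,
and no two of these are adjacent.
-/

open SimpleGraph

section IsolationDomination

variable {V W : Type*} {G : SimpleGraph V} {H : SimpleGraph W}

lemma subset_closedNbhd (G : SimpleGraph V) (A : Set V) : A ⊆ closedNbhd G A :=
  fun _ => Or.inl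

lemma mem_closedNbhd_of_adj {A : Set V} {a v : V} (ha : a ∈ A)
    (hadj : G.Adj a v) : v ∈ closedNbhd G A :=
  Or.inr ⟨a, ha, hadj⟩

lemma isIsolating_univ (G : SimpleGraph V) : IsIsolating G Set.univ :=
  fun u hu => (hu (subset_closedNbhd G _ (Set.mem_univ u))).elim

lemma isDominating_univ (G : SimpleGraph V) : IsDominating G Set.univ :=
  Set.eq_univ_of_forall fun v => subset_closedNbhd G _ (Set.mem_univ v)

lemma isolationNum_le_ncard {A : Set V} (hA : IsIsolating G A) : isolationNum G ≤ A.ncard :=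
  Nat.sInf_le ⟨A, hA, rfl⟩

lemma dominationNum_le_ncard {D : Set V} (hD : IsDominating G D) : dominationNum G ≤ D.ncard :=
  Nat.sInf_le ⟨D, hD, rfl⟩

lemma exists_isIsolating_ncard_eq_isolationNum (G : SimpleGraph V) :
    ∃ A : Set V, IsIsolating G A ∧ A.ncard = isolationNum G :=
  Nat.sInf_mem (s := {n | ∃ A : Set V, IsIsolating G A ∧ A.ncard = n})
    ⟨_, _, isIsolating_univ G, rfl⟩

lemma exists_isDominating_ncard_eq_dominationNum (G : SimpleGraph V) :
    ∃ D : Set V, IsDominating G D ∧ D.ncard = dominationNum G :=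
  Nat.sInf_mem (s := {n | ∃ D : Set V, IsDominating G D ∧ D.ncard = n})
    ⟨_, _, isDominating_univ G, rfl⟩

lemma IsIsolating.image_iso {A : Set V} (hA : IsIsolating G A) (e : G ≃g H) :
    IsIsolating H (e '' A) := by
  have hpull : ∀ w, w ∉ closedNbhd H (e '' A) → e.symm w ∉ closedNbhd G A := by
    rintro w hw (hmem | ⟨a, ha, hadj⟩)
    · exact hw (subset_closedNbhd H _ ⟨_, hmem, e.apply_symm_apply w⟩)
    · exact hw (mem_closedNbhd_of_adj ⟨a, ha, rfl⟩ (by simpa using e.map_adj_iff.mpr hadj))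
  intro u hu v hv huv
  exact hA _ (hpull u hu) _ (hpull v hv) (e.symm.map_adj_iff.mpr huv)

lemma SimpleGraph.Iso.isolationNum_le (e : G ≃g H) : isolationNum H ≤ isolationNum G := by
  obtain ⟨A, hA, hcard⟩ := exists_isIsolating_ncard_eq_isolationNum G
  calc isolationNum H ≤ (e '' A).ncard := isolationNum_le_ncard (hA.image_iso e)
    _ = isolationNum G := by rw [Set.ncard_image_of_injective _ e.injective, hcard]

lemma SimpleGraph.Iso.isolationNum_eq (e : G ≃g H) : isolationNum G = isolationNum H :=
  le_antisymm e.symm.isolationNum_le e.isolationNum_le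

lemma IsIsolating.isDominating_image_fst {A : Set (V × Bool)}
    (hA : IsIsolating (G □ (⊤ : SimpleGraph Bool)) A) : IsDominating G (Prod.fst '' A) := by
  refine Set.eq_univ_of_forall fun v => by_contra fun hv => ?_
  have hmissed : ∀ b, (v, b) ∉ closedNbhd (G □ ⊤) A := by
    rintro b (hmem | ⟨a, ha, (⟨hadj, -⟩ | ⟨-, hfst⟩)⟩)
    · exact hv (subset_closedNbhd G _ ⟨_, hmem, rfl⟩)
    · exact hv (mem_closedNbhd_of_adj ⟨a, ha, rfl⟩ hadj)
    · exact hv (subset_closedNbhd G _ ⟨a, ha, hfst⟩)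
  exact hA _ (hmissed false) _ (hmissed true) (boxProd_adj_right.mpr (by simp))

lemma IsDominating.isIsolating_image_coloring {D : Set V} (hD : IsDominating G D)
    (c : G.Coloring Bool) :
    IsIsolating (G □ (⊤ : SimpleGraph Bool)) ((fun v => (v, c v)) '' D) := by
  have hmissed : ∀ v b, (v, b) ∉ closedNbhd (G □ ⊤) ((fun v => (v, c v)) '' D) → b = c v := by
    intro v b hx
    by_contra hb
    have hv : v ∈ closedNbhd G D := hD ▸ Set.mem_univ v
    rcases hv with hmem | ⟨d, hd, hadj⟩
    · exact hx (mem_closedNbhd_of_adj ⟨v, hmem, rfl⟩ (Or.inr ⟨Ne.symm hb, rfl⟩))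
    · have hbd : c d = b := by
        rw [Bool.eq_not_iff.mpr (c.valid hadj), Bool.eq_not_iff.mpr hb]
      exact hx (mem_closedNbhd_of_adj ⟨d, hd, rfl⟩ (Or.inl ⟨hadj, hbd⟩))
  rintro x hx y hy (⟨hadj, hsnd⟩ | ⟨hne, hfst⟩)
  · exact c.valid hadj (by rw [← hmissed _ _ hx, ← hmissed _ _ hy, hsnd])
  · exact hne.ne (by rw [hmissed _ _ hx, hmissed _ _ hy, hfst])

theorem isolationNum_boxProd_top_eq_dominationNum [Finite V] (c : G.Coloring Bool) :
    isolationNum (G □ (⊤ : SimpleGraph Bool)) = dominationNum G := by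
  apply le_antisymm
  · obtain ⟨D, hD, hcard⟩ := exists_isDominating_ncard_eq_dominationNum G
    calc isolationNum (G □ ⊤) ≤ ((fun v => (v, c v)) '' D).ncard :=
          isolationNum_le_ncard (hD.isIsolating_image_coloring c)
      _ = dominationNum G := by
          rw [Set.ncard_image_of_injective _ fun _ _ h => congrArg Prod.fst h, hcard]
  · obtain ⟨A, hA, hcard⟩ := exists_isIsolating_ncard_eq_isolationNum (G □ (⊤ : SimpleGraph Bool))
    calc dominationNum G ≤ (Prod.fst '' A).ncard := dominationNum_le_ncard hA.isDominating_image_fst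
      _ ≤ A.ncard := Set.ncard_image_le (Set.toFinite A)
      _ = isolationNum (G □ ⊤) := hcard

end IsolationDomination

section Hypercube

lemma hypercube_succ_adj_iff {n : ℕ} (u v : Fin (n + 1) → Bool) :
    (hypercube (n + 1)).Adj u v ↔
      (hypercube n).Adj (Fin.init u) (Fin.init v) ∧ u (Fin.last n) = v (Fin.last n) ∨
      u (Fin.last n) ≠ v (Fin.last n) ∧ Fin.init u = Fin.init v := by
  constructor
  · rintro ⟨i, hi, huniq⟩
    rcases Fin.eq_castSucc_or_eq_last i with ⟨i, rfl⟩ | rfl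
    · refine Or.inl ⟨⟨i, hi, fun j hj => Fin.castSucc_injective _ (huniq _ hj)⟩,
        by_contra fun h => (Fin.castSucc_lt_last i).ne (huniq _ h).symm⟩
    · exact Or.inr ⟨hi, funext fun j =>
        by_contra fun h => (Fin.castSucc_lt_last j).ne (huniq _ h)⟩
  · rintro (⟨⟨i, hi, huniq⟩, hlast⟩ | ⟨hlast, hinit⟩)
    · refine ⟨i.castSucc, hi, Fin.lastCases (fun h => absurd hlast h) fun j hj => ?_⟩
      exact congrArg Fin.castSucc (huniq j hj)
    · refine ⟨Fin.last n, hlast, Fin.lastCases (fun _ => rfl) fun j hj => ?_⟩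
      exact absurd (congrFun hinit j) hj

def hypercubeSuccIso (n : ℕ) : hypercube (n + 1) ≃g hypercube n □ (⊤ : SimpleGraph Bool) where
  toFun u := (Fin.init u, u (Fin.last n))
  invFun x := Fin.snoc x.1 x.2
  left_inv u := Fin.snoc_init_self u
  right_inv x := by simp
  map_rel_iff' {u v} := (hypercube_succ_adj_iff u v).symm

def SimpleGraph.Coloring.boxProdTopBool {V : Type*} {G : SimpleGraph V} (c : G.Coloring Bool) :
    (G □ (⊤ : SimpleGraph Bool)).Coloring Bool :=
  Coloring.mk (fun x => xor (c x.1) x.2) fun {x y} h => by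
    rcases h with ⟨hadj, hsnd⟩ | ⟨hne, hfst⟩
    · simpa [hsnd] using c.valid hadj
    · simpa [hfst] using hne

def hypercubeColoring : (n : ℕ) → (hypercube n).Coloring Bool
  | 0 => Coloring.mk (fun _ => false) fun ⟨i, _⟩ => i.elim0
  | n + 1 => (hypercubeColoring n).boxProdTopBool.comp (hypercubeSuccIso n).toHom

end Hypercube

theorem isolation_hypercube_succ_eq_domination_hypercube_general (n : ℕ) :
    isolationNum (hypercube (n + 1)) = dominationNum (hypercube n) := by
  rw [(hypercubeSuccIso n).isolationNum_eq]
  exact isolationNum_boxProd_top_eq_dominationNum (hypercubeColoring n)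

/-- For every positive integer `n`, `ι(Q_{n+1}) = γ(Q_n)`. -/
theorem isolation_hypercube_succ_eq_domination_hypercube (n : ℕ) (hn : 1 ≤ n) :
    isolationNum (hypercube (n + 1)) = dominationNum (hypercube n) :=
  isolation_hypercube_succ_eq_domination_hypercube_general n
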